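/- arXiv:2504.11429 — 2 statements merged into one kernel-verified Lean document; each statement's English description precedes it below -/
import Mathlib

section
/- Let W be a measurable space, μ = μ̄_1 ⊗ ⋯ ⊗ μ̄_n a database distribution on W^n, m ≤ n, and 𝒯_{n,m} the uniform distribution on injective templates τ : Fin m → Fin n (sampling without replacement). Then for every index j and all v, w ∈ W, the total variation distance between the subsampled distributions satisfies d_TV( Σ_τ 𝒯_{n,m}(τ)·(SAMP_τ)_* μ_{j,v} , Σ_τ 𝒯_{n,m}(τ)·(SAMP_τ)_* μ_{j,w} ) ≤ m/n, the probability that the sensitive index j is drawn. -/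
open MeasureTheory Real
open scoped ENNReal

noncomputable section

/-- Hockey-stick divergence / privacy curve `Δ_ε(μ,ν)`. -/
def hsDiv {A : Type*} [MeasurableSpace A] (ε : ℝ) (μ ν : Measure A) : ℝ :=
  ⨆ S : {S : Set A // MeasurableSet S}, ((μ S.1).toReal - Real.exp ε * (ν S.1).toReal)

/-- Subsampling map induced by a template. -/
def SAMP {W : Type*} {n m : ℕ} (τ : Fin m → Fin n) (x : Fin n → W) : Fin m → W :=
  fun i => x (τ i)

/-- Product measure with `j`-th factor replaced by the Dirac measure at `v`. -/
def fixEntry {W : Type*} [MeasurableSpace W] {n : ℕ} (μbar : Fin n → Measure W)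
    (j : Fin n) (v : W) : Measure (Fin n → W) :=
  Measure.pi (Function.update μbar j (Measure.dirac v))

open Classical in
/-- Sampling privacy curve `SPC^j` : conditional expectation over templates containing `j`. -/
def SPCj {W A : Type*} [MeasurableSpace W] [MeasurableSpace A] {n m : ℕ}
    (F : (Fin m → W) → A) (μbar : Fin n → Measure W)
    (𝒯 : (Fin m → Fin n) → ℝ≥0∞) (j : Fin n) (ε : ℝ) : ℝ :=
  (∑ τ : Fin m → Fin n, if j ∈ Set.range τ then (𝒯 τ).toReal *
      (⨆ v : W, ⨆ w : W, hsDiv ε (Measure.map (fun x => F (SAMP τ x)) (fixEntry μbar j v))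
        (Measure.map (fun x => F (SAMP τ x)) (fixEntry μbar j w))) else 0) /
  (∑ τ : Fin m → Fin n, if j ∈ Set.range τ then (𝒯 τ).toReal else 0)

open Classical in
/-- Uniform distribution on injective templates (sampling without replacement). -/
def uniformInj (n m : ℕ) : (Fin m → Fin n) → ℝ≥0∞ :=
  fun τ => if Function.Injective τ then
    ((Finset.univ.filter (fun σ : Fin m → Fin n => Function.Injective σ)).card : ℝ≥0∞)⁻¹ else 0

open Classical in
/-- Conditioning of a distribution on templates to an event. -/
def condDist {n m : ℕ} (𝒯 : (Fin m → Fin n) → ℝ≥0∞) (E : Set (Fin m → Fin n)) :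
    (Fin m → Fin n) → ℝ≥0∞ :=
  fun τ => if τ ∈ E then 𝒯 τ / (∑ σ : Fin m → Fin n, if σ ∈ E then 𝒯 σ else 0) else 0

/-- The increasing enumeration of a finite set of indices, as a sampling template. -/
def poissonTemplate {n : ℕ} (s : Finset (Fin n)) : Fin s.card → Fin n :=
  fun i => (s.orderIsoOfFin rfl i : Fin n)

/-- Statistical privacy curve of a query. -/
def Phi {W A : Type*} [MeasurableSpace W] [MeasurableSpace A] {k : ℕ}
    (μbar : Fin k → Measure W) (F : (Fin k → W) → A) (ε : ℝ) : ℝ :=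
  ⨆ j : Fin k, ⨆ v : W, ⨆ w : W,
    hsDiv ε (Measure.map F (fixEntry μbar j v)) (Measure.map F (fixEntry μbar j w))

/-- trade-off function -/
def tradeOff {A : Type*} [MeasurableSpace A] (P Q : Measure A) (α : ℝ) : ℝ :=
  sInf { y | ∃ S : Set A, MeasurableSet S ∧ (P Sᶜ).toReal ≤ α ∧ y = (Q S).toReal }

/-- total variation distance -/
def tvDist {A : Type*} [MeasurableSpace A] (μ ν : Measure A) : ℝ :=
  ⨆ S : {S : Set A // MeasurableSet S}, |(μ S.1).toReal - (ν S.1).toReal|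

/-- support of a measure -/
def msupport {X : Type*} [TopologicalSpace X] [MeasurableSpace X] (μ : Measure X) : Set X :=
  {x | ∀ U : Set X, IsOpen U → x ∈ U → 0 < μ U}

/-- τ ≈_j σ -/
def ApproxAt {n m : ℕ} (j : Fin n) (τ σ : Fin m → Fin n) : Prop :=
  ∀ i, (τ i ≠ j → σ i = τ i) ∧ (τ i = j → σ i ≠ j)

/-- F-samplable -/
def FSamplable {W : Type*} [MeasurableSpace W] {n m : ℕ}
    (μbar : Fin n → Measure W) (F : (Fin m → W) → ℝ) : Prop :=
  ∀ (τ σ : Fin m → Fin n) (j : Fin n) (v w : W) (ε : ℝ), 0 ≤ ε →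
    ∃ S : Set ℝ, ((∃ a, S = Set.Iic a) ∨ (∃ a, S = Set.Ici a) ∨ S = ∅) ∧
      ((Measure.map (fun x => F (SAMP τ x)) (fixEntry μbar j v)) S).toReal -
        Real.exp ε * ((Measure.map (fun x => F (SAMP σ x)) (fixEntry μbar j w)) S).toReal =
      hsDiv ε (Measure.map (fun x => F (SAMP τ x)) (fixEntry μbar j v))
        (Measure.map (fun x => F (SAMP σ x)) (fixEntry μbar j w))

section Helpers
open Function Set

lemma probUpdate {W : Type*} [MeasurableSpace W] {n : ℕ} {ν : Fin n → Measure W}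
    (hν : ∀ i, IsProbabilityMeasure (ν i)) (j : Fin n) (w : W) (i : Fin n) :
    IsProbabilityMeasure (Function.update ν j (Measure.dirac w) i) := by
  rcases eq_or_ne i j with rfl | hij
  · rw [Function.update_self]; infer_instance
  · rw [Function.update_of_ne hij]; exact hν i

lemma map_update_pi {W : Type*} [MeasurableSpace W] {n : ℕ} (ν : Fin n → Measure W)
    (hν : ∀ i, IsProbabilityMeasure (ν i)) (j : Fin n) (w : W) :
    Measure.map (fun x => Function.update x j w) (Measure.pi ν)
      = Measure.pi (Function.update ν j (Measure.dirac w)) := by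
  haveI := hν
  haveI := probUpdate hν j w
  refine (Measure.pi_eq (μ := Function.update ν j (Measure.dirac w)) fun s hs => ?_).symm
  rw [Measure.map_apply measurable_update_left (MeasurableSet.univ_pi hs)]
  by_cases hw : w ∈ s j
  · have hpre : (fun x => Function.update x j w) ⁻¹' (Set.pi univ s)
        = Set.pi univ (Function.update s j Set.univ) := by
      ext x
      simp only [Set.mem_preimage, Set.mem_pi, Set.mem_univ, true_imp_iff]
      constructor
      · intro h i
        rcases eq_or_ne i j with rfl | hij
        · simp
        · have := h i
          rw [Function.update_of_ne hij] at this ⊢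
          exact this
      · intro h i
        rcases eq_or_ne i j with rfl | hij
        · simpa using hw
        · have := h i
          rw [Function.update_of_ne hij] at this ⊢
          exact this
    rw [hpre, Measure.pi_pi]
    refine Finset.prod_congr rfl fun i _ => ?_
    rcases eq_or_ne i j with rfl | hij
    · simp [Measure.dirac_apply' _ (hs i), hw, measure_univ]
    · rw [Function.update_of_ne hij, Function.update_of_ne hij]
  · have hpre : (fun x => Function.update x j w) ⁻¹' (Set.pi univ s) = ∅ := by
      ext x
      simp only [Set.mem_preimage, Set.mem_pi, Set.mem_univ, true_imp_iff, Set.mem_empty_iff_false,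
        iff_false]
      intro h
      exact hw (by simpa using h j)
    rw [hpre]
    rw [Finset.prod_eq_zero (Finset.mem_univ j)]
    · simp
    · simp [Measure.dirac_apply' _ (hs j), hw]

lemma desc_id : ∀ (m n : ℕ), m ≤ n → n * (n-1).descFactorial m = (n - m) * n.descFactorial m := by
  intro m
  induction m with
  | zero => intro n _; simp
  | succ m ih =>
    intro n hn
    have hm : m ≤ n := le_of_lt (Nat.lt_of_succ_le hn)
    rw [Nat.descFactorial_succ, Nat.descFactorial_succ]
    have h1 : n - 1 - m = n - (m+1) := by omega
    calc n * ((n - 1 - m) * (n-1).descFactorial m)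
        = (n - 1 - m) * (n * (n-1).descFactorial m) := by ring
      _ = (n - (m+1)) * ((n - m) * n.descFactorial m) := by rw [h1, ih n hm]

open Classical in
lemma card_inj (n m : ℕ) :
    (Finset.univ.filter (fun σ : Fin m → Fin n => Function.Injective σ)).card
      = n.descFactorial m := by
  rw [← Fintype.card_subtype]
  rw [Fintype.card_congr (Equiv.subtypeInjectiveEquivEmbedding (Fin m) (Fin n))]
  simp [Fintype.card_embedding_eq]

open Classical in
lemma card_inj_avoid (n m : ℕ) (j : Fin n) :
    (Finset.univ.filter (fun σ : Fin m → Fin n =>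
        Function.Injective σ ∧ j ∉ Set.range σ)).card = (n-1).descFactorial m := by
  rw [← Fintype.card_subtype]
  have e : {σ : Fin m → Fin n // Function.Injective σ ∧ j ∉ Set.range σ}
      ≃ (Fin m ↪ {i : Fin n // i ≠ j}) := by
    refine ⟨fun σ => ⟨fun i => ⟨σ.1 i, fun h => σ.2.2 ⟨i, h⟩⟩,
        fun a b h => σ.2.1 (congrArg Subtype.val h)⟩,
      fun e => ⟨fun i => (e i).1, ?_, ?_⟩, fun σ => rfl, fun e => ?_⟩
    · intro a b h
      exact e.injective (Subtype.ext h)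
    · rintro ⟨i, hi⟩
      exact (e i).2 hi
    · ext i
      rfl
  rw [Fintype.card_congr e, Fintype.card_embedding_eq]
  congr 1
  · rw [Fintype.card_subtype_compl]
    simp
  · simp

lemma measurable_SAMP {W : Type*} [MeasurableSpace W] {n m : ℕ} (τ : Fin m → Fin n) :
    Measurable (SAMP (W := W) τ) :=
  measurable_pi_lambda _ fun i => measurable_pi_apply (τ i)

lemma probFixEntry {W : Type*} [MeasurableSpace W] {n : ℕ} {μbar : Fin n → Measure W}
    (hμ : ∀ i, IsProbabilityMeasure (μbar i)) (j : Fin n) (v : W) :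
    IsProbabilityMeasure (fixEntry μbar j v) := by
  haveI := probUpdate hμ j v
  exact inferInstanceAs (IsProbabilityMeasure (Measure.pi _))

lemma map_SAMP_fixEntry_eq {W : Type*} [MeasurableSpace W] {n m : ℕ}
    {μbar : Fin n → Measure W} (hμ : ∀ i, IsProbabilityMeasure (μbar i))
    {τ : Fin m → Fin n} {j : Fin n} (hj : j ∉ Set.range τ) (v w : W) :
    Measure.map (SAMP τ) (fixEntry μbar j v) = Measure.map (SAMP τ) (fixEntry μbar j w) := by
  have key : ∀ u : W, Measure.map (SAMP τ) (fixEntry μbar j u)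
      = Measure.map (SAMP τ) (Measure.pi μbar) := by
    intro u
    have h1 : fixEntry μbar j u = Measure.map (fun x => Function.update x j u) (Measure.pi μbar) := by
      rw [map_update_pi μbar hμ j u]; rfl
    rw [h1, Measure.map_map (measurable_SAMP τ) measurable_update_left]
    congr 1
    funext x
    funext i
    have : τ i ≠ j := fun h => hj ⟨i, h⟩
    simp [SAMP, Function.update_of_ne this]
  rw [key v, key w]


end Helpers

/-- for sampling without replacement, subsampled distributions that differ
only in entry `j` are at total variation distance at most `m/n`. -/
theorem tvDist_subsample_without_replacement_le
    {W : Type*} [MeasurableSpace W] {n m : ℕ} (hn : 0 < n) (hm : m ≤ n)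
    (μbar : Fin n → Measure W) (hμ : ∀ i, IsProbabilityMeasure (μbar i))
    (j : Fin n) (v w : W) :
    tvDist
      (Measure.sum fun τ : Fin m → Fin n =>
        uniformInj n m τ • Measure.map (SAMP τ) (fixEntry μbar j v))
      (Measure.sum fun τ : Fin m → Fin n =>
        uniformInj n m τ • Measure.map (SAMP τ) (fixEntry μbar j w))
      ≤ (m : ℝ) / (n : ℝ) := by
  classical
  have hDdesc := card_inj n m
  set D := (Finset.univ.filter (fun σ : Fin m → Fin n => Function.Injective σ)).card with hDdef
  have hDpos : 0 < D := by
    rw [hDdesc]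
    exact Nat.pos_of_ne_zero (fun h => absurd (Nat.descFactorial_eq_zero_iff_lt.mp h) (not_lt.2 hm))
  -- basic facts
  have hcne : ∀ τ : Fin m → Fin n, uniformInj n m τ ≠ ∞ := by
    intro τ
    unfold uniformInj
    split
    · exact ENNReal.inv_ne_top.2 (by exact_mod_cast hDpos.ne')
    · exact ENNReal.zero_ne_top
  have hprob : ∀ (τ : Fin m → Fin n) (u : W),
      IsProbabilityMeasure (Measure.map (SAMP τ) (fixEntry μbar j u)) := by
    intro τ u
    haveI := probFixEntry hμ j u
    exact Measure.isProbabilityMeasure_map (measurable_SAMP τ).aemeasurable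
  have hdiv : (0:ℝ) ≤ (m:ℝ)/(n:ℝ) := by positivity
  refine Real.iSup_le (fun S => ?_) hdiv
  obtain ⟨S, hS⟩ := S
  have hsum : ∀ u : W,
      ((Measure.sum fun τ : Fin m → Fin n =>
          uniformInj n m τ • Measure.map (SAMP τ) (fixEntry μbar j u)) S).toReal
        = ∑ τ : Fin m → Fin n,
            (uniformInj n m τ).toReal * ((Measure.map (SAMP τ) (fixEntry μbar j u)) S).toReal := by
    intro u
    rw [Measure.sum_apply _ hS, tsum_fintype, ENNReal.toReal_sum]
    · refine Finset.sum_congr rfl fun τ _ => ?_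
      rw [Measure.smul_apply, smul_eq_mul, ENNReal.toReal_mul]
    · intro τ _
      rw [Measure.smul_apply, smul_eq_mul]
      haveI := hprob τ u
      exact ENNReal.mul_ne_top (hcne τ) (measure_ne_top _ S)
  rw [hsum v, hsum w, ← Finset.sum_sub_distrib]
  refine le_trans (Finset.abs_sum_le_sum_abs _ _) ?_
  have key : ∀ τ : Fin m → Fin n,
      |(uniformInj n m τ).toReal * ((Measure.map (SAMP τ) (fixEntry μbar j v)) S).toReal
        - (uniformInj n m τ).toReal * ((Measure.map (SAMP τ) (fixEntry μbar j w)) S).toReal|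
      ≤ (if Function.Injective τ ∧ j ∈ Set.range τ then ((D:ℝ))⁻¹ else 0) := by
    intro τ
    by_cases hinj : Function.Injective τ
    · by_cases hrange : j ∈ Set.range τ
      · rw [if_pos ⟨hinj, hrange⟩]
        have hc : (uniformInj n m τ).toReal = (D:ℝ)⁻¹ := by
          unfold uniformInj
          rw [if_pos hinj, ← hDdef]
          simp
        rw [hc, ← mul_sub, abs_mul, abs_of_nonneg (by positivity : (0:ℝ) ≤ (D:ℝ)⁻¹)]
        have h1 : |((Measure.map (SAMP τ) (fixEntry μbar j v)) S).toReal
            - ((Measure.map (SAMP τ) (fixEntry μbar j w)) S).toReal| ≤ 1 := by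
          haveI := hprob τ v
          haveI := hprob τ w
          rw [abs_sub_le_iff]
          constructor
          · have := prob_le_one (μ := Measure.map (SAMP τ) (fixEntry μbar j v)) (s := S)
            have h2 : (0:ℝ) ≤ ((Measure.map (SAMP τ) (fixEntry μbar j w)) S).toReal :=
              ENNReal.toReal_nonneg
            have h3 : ((Measure.map (SAMP τ) (fixEntry μbar j v)) S).toReal ≤ 1 := by
              rw [← ENNReal.toReal_one]
              exact ENNReal.toReal_mono ENNReal.one_ne_top prob_le_one
            linarith
          · have h2 : (0:ℝ) ≤ ((Measure.map (SAMP τ) (fixEntry μbar j v)) S).toReal :=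
              ENNReal.toReal_nonneg
            have h3 : ((Measure.map (SAMP τ) (fixEntry μbar j w)) S).toReal ≤ 1 := by
              rw [← ENNReal.toReal_one]
              exact ENNReal.toReal_mono ENNReal.one_ne_top prob_le_one
            linarith
        calc (D:ℝ)⁻¹ * |_| ≤ (D:ℝ)⁻¹ * 1 := by
              exact mul_le_mul_of_nonneg_left h1 (by positivity)
          _ = (D:ℝ)⁻¹ := mul_one _
      · rw [if_neg (fun h => hrange h.2)]
        rw [map_SAMP_fixEntry_eq hμ hrange v w]
        simp
    · rw [if_neg (fun h => hinj h.1)]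
      have hc : (uniformInj n m τ).toReal = 0 := by
        unfold uniformInj
        rw [if_neg hinj]
        simp
      rw [hc]
      simp
  refine le_trans (Finset.sum_le_sum fun τ _ => key τ) ?_
  rw [← Finset.sum_filter]
  rw [Finset.sum_const, nsmul_eq_mul]
  -- cardinality computation
  set B := (Finset.univ.filter (fun σ : Fin m → Fin n =>
      Function.Injective σ ∧ j ∉ Set.range σ)).card with hBdef
  have hBdesc := card_inj_avoid n m j
  have hcards : (Finset.univ.filter (fun τ : Fin m → Fin n =>
      Function.Injective τ ∧ j ∈ Set.range τ)).card + B = D := by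
    have h0 := Finset.card_filter_add_card_filter_not
      (s := Finset.univ.filter (fun σ : Fin m → Fin n => Function.Injective σ))
      (p := fun σ => j ∈ Set.range σ)
    rw [Finset.filter_filter, Finset.filter_filter] at h0
    rw [hBdef, hDdef]
    convert h0 using 3
  have hid : n * (n-1).descFactorial m = (n - m) * n.descFactorial m := desc_id m n hm
  have hBD : B ≤ D := by omega
  have hA : ((Finset.univ.filter (fun τ : Fin m → Fin n =>
      Function.Injective τ ∧ j ∈ Set.range τ)).card : ℝ) = (D:ℝ) - (B:ℝ) := by
    have h0 := hcards
    have : ((Finset.univ.filter (fun τ : Fin m → Fin n =>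
        Function.Injective τ ∧ j ∈ Set.range τ)).card : ℝ) + (B:ℝ) = (D:ℝ) := by
      exact_mod_cast congrArg (Nat.cast : ℕ → ℝ) h0
    linarith
  rw [hA]
  have hnB : (n:ℝ) * (B:ℝ) = ((n:ℝ) - (m:ℝ)) * (D:ℝ) := by
    have h1 : (n:ℝ) * ((n-1).descFactorial m : ℝ)
        = (((n:ℕ) - m : ℕ):ℝ) * (n.descFactorial m : ℝ) := by exact_mod_cast hid
    rw [Nat.cast_sub hm] at h1
    rw [hDdesc, hBdef.trans hBdesc]
    exact h1
  have hD0 : (0:ℝ) < (D:ℝ) := by exact_mod_cast hDpos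
  have hn0 : (0:ℝ) < (n:ℝ) := by exact_mod_cast hn
  have key2 : ((D:ℝ) - (B:ℝ)) * (D:ℝ)⁻¹ = (m:ℝ)/(n:ℝ) := by
    field_simp
    nlinarith [hnB]
  exact le_of_eq key2

end
end

section
/- Let h : ℝ → [0,∞) be measurable, T₁,…,T_k : ℝ → ℝ measurable, c, c' > 0, and ξ, ξ' ∈ ℝ^k, such that f(x) := c·h(x)·exp(Σ_{i=1}^k ξ_i·T_i(x)) and f'(x) := c'·h(x)·exp(Σ_{i=1}^k ξ'_i·T_i(x)) are probability densities on ℝ (with respect to Lebesgue measure), i.e. both are members of the same exponential family. Assume the function x ↦ Σ_{i=1}^k T_i(x)·(ξ_i − ξ'_i) is a polynomial of degree at most one (affine). Then for every ε ≥ 0 there exists â ∈ ℝ such that some set S ∈ {(−∞, â], [â, ∞), ∅} attains the supremum of ∫_S (f(x) − e^ε·f'(x)) dx over all measurable sets S ⊆ ℝ. -/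
open MeasureTheory Real
open scoped ENNReal

noncomputable section

private lemma key_sup (g : ℝ → ℝ) (hg : Integrable g) (S : Set ℝ) (hS : MeasurableSet S)
    (h1 : ∀ x, 0 < g x → x ∈ S) (h2 : ∀ x ∈ S, 0 ≤ g x) :
    (∫ x in S, g x) = ⨆ S' : {S' : Set ℝ // MeasurableSet S'}, ∫ x in S'.1, g x := by
  have claim : ∀ S' : Set ℝ, MeasurableSet S' → (∫ x in S', g x) ≤ ∫ x in S, g x := by
    intro S' hS'
    have d1 : (∫ x in S' ∩ S, g x) + ∫ x in S' \ S, g x = ∫ x in S', g x :=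
      integral_inter_add_diff hS hg.integrableOn
    have d2 : (∫ x in S ∩ S', g x) + ∫ x in S \ S', g x = ∫ x in S, g x :=
      integral_inter_add_diff hS' hg.integrableOn
    have e1 : (∫ x in S' \ S, g x) ≤ 0 :=
      setIntegral_nonpos (hS'.diff hS) fun x hx =>
        le_of_not_gt fun hlt => hx.2 (h1 x hlt)
    have e2 : (0:ℝ) ≤ ∫ x in S \ S', g x :=
      setIntegral_nonneg (hS.diff hS') fun x hx => h2 x hx.1
    have e3 : (∫ x in S' ∩ S, g x) = ∫ x in S ∩ S', g x := by rw [Set.inter_comm]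
    linarith
  have hbdd : BddAbove (Set.range fun S' : {S' : Set ℝ // MeasurableSet S'} => ∫ x in S'.1, g x) := by
    refine ⟨∫ x in S, g x, ?_⟩
    rintro y ⟨S', rfl⟩
    exact claim S'.1 S'.2
  refine le_antisymm (le_ciSup hbdd ⟨S, hS⟩) (ciSup_le fun S' => claim S'.1 S'.2)

/-- for two densities from the same exponential family whose natural-parameter
difference pairs with the sufficient statistic to an affine function, the hockey-stick
supremum is attained on a half-line or the empty set. -/
theorem exponential_family_samplable
    {k : ℕ} (h : ℝ → ℝ) (hh : Measurable h) (hh0 : ∀ x, 0 ≤ h x)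
    (T : Fin k → ℝ → ℝ) (hT : ∀ i, Measurable (T i))
    (c c' : ℝ) (hc : 0 < c) (hc' : 0 < c')
    (ξ ξ' : Fin k → ℝ)
    (f f' : ℝ → ℝ)
    (hf : ∀ x, f x = c * h x * Real.exp (∑ i, ξ i * T i x))
    (hf' : ∀ x, f' x = c' * h x * Real.exp (∑ i, ξ' i * T i x))
    (hfint : ∫ x, f x = 1) (hf'int : ∫ x, f' x = 1)
    (haffine : ∃ a b : ℝ, ∀ x, ∑ i, T i x * (ξ i - ξ' i) = a * x + b)
    (ε : ℝ) (hε : 0 ≤ ε) :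
    ∃ (aHat : ℝ) (S : Set ℝ), (S = Set.Iic aHat ∨ S = Set.Ici aHat ∨ S = ∅) ∧
      (∫ x in S, (f x - Real.exp ε * f' x)) =
        ⨆ S' : {S' : Set ℝ // MeasurableSet S'}, ∫ x in S'.1, (f x - Real.exp ε * f' x) := by
  obtain ⟨a, b, hab⟩ := haffine
  set g : ℝ → ℝ := fun x => f x - Real.exp ε * f' x with hg
  -- integrability
  have hfInt : Integrable f := by
    by_contra hcon
    rw [integral_undef hcon] at hfint; norm_num at hfint
  have hf'Int : Integrable f' := by
    by_contra hcon
    rw [integral_undef hcon] at hf'int; norm_num at hf'int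
  have hgInt : Integrable g := hfInt.sub (hf'Int.const_mul _)
  set t : ℝ := Real.log (Real.exp ε * c' / c) with ht
  have hexpt : Real.exp t = Real.exp ε * c' / c :=
    Real.exp_log (by positivity)
  -- factorization of g
  have geq : ∀ x, g x = h x * Real.exp (∑ i, ξ' i * T i x) *
      (c * Real.exp (a * x + b) - Real.exp ε * c') := by
    intro x
    have hsum : ∑ i, ξ i * T i x = (∑ i, ξ' i * T i x) + (a * x + b) := by
      rw [← hab x]
      rw [← Finset.sum_add_distrib]
      exact Finset.sum_congr rfl fun i _ => by ring
    rw [hg]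
    simp only [hf, hf', hsum, Real.exp_add]
    ring
  -- sign facts
  have fact1 : ∀ x, t ≤ a * x + b → 0 ≤ g x := by
    intro x hx
    rw [geq x]
    apply mul_nonneg (mul_nonneg (hh0 x) (Real.exp_pos _).le)
    have : Real.exp t ≤ Real.exp (a * x + b) := Real.exp_le_exp.2 hx
    rw [hexpt] at this
    rw [sub_nonneg]
    calc Real.exp ε * c' = c * (Real.exp ε * c' / c) := by field_simp
      _ ≤ c * Real.exp (a * x + b) := by
          exact mul_le_mul_of_nonneg_left this hc.le
  have fact2 : ∀ x, 0 < g x → t ≤ a * x + b := by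
    intro x hx
    by_contra hcon
    push_neg at hcon
    have : Real.exp (a * x + b) ≤ Real.exp t := Real.exp_le_exp.2 hcon.le
    rw [hexpt] at this
    have hfac : c * Real.exp (a * x + b) - Real.exp ε * c' ≤ 0 := by
      rw [sub_nonpos]
      calc c * Real.exp (a * x + b) ≤ c * (Real.exp ε * c' / c) :=
            mul_le_mul_of_nonneg_left this hc.le
        _ = Real.exp ε * c' := by field_simp
    have := mul_nonpos_of_nonneg_of_nonpos
      (mul_nonneg (hh0 x) (Real.exp_pos (∑ i, ξ' i * T i x)).le) hfac
    rw [← geq x] at this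
    linarith
  rcases lt_trichotomy a 0 with ha | ha | ha
  · -- a < 0 : S = Iic ((t-b)/a)
    refine ⟨(t - b) / a, Set.Iic ((t - b) / a), Or.inl rfl, ?_⟩
    apply key_sup g hgInt _ measurableSet_Iic
    · intro x hx
      have := fact2 x hx
      rw [Set.mem_Iic, le_div_iff_of_neg ha]
      linarith
    · intro x hx
      rw [Set.mem_Iic, le_div_iff_of_neg ha] at hx
      exact fact1 x (by linarith)
  · -- a = 0
    subst ha
    by_cases hb : t ≤ b
    · -- g ≥ 0 everywhere, ∫ g = 1 - e^ε ≤ 0, so g = 0 a.e.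
      have hgnn : ∀ x, 0 ≤ g x := fun x => fact1 x (by linarith)
      have hint : ∫ x, g x = 1 - Real.exp ε := by
        rw [hg]
        rw [integral_sub hfInt (hf'Int.const_mul _), integral_const_mul, hfint, hf'int]
        ring
      have hle : ∫ x, g x ≤ 0 := by
        rw [hint]; have := Real.one_le_exp hε; linarith
      have hge : 0 ≤ ∫ x, g x := integral_nonneg hgnn
      have hzero : g =ᵐ[volume] 0 :=
        (integral_eq_zero_iff_of_nonneg hgnn hgInt).1 (le_antisymm hle hge)
      have hall : ∀ S' : {S' : Set ℝ // MeasurableSet S'}, (∫ x in S'.1, g x) = 0 := by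
        intro S'
        rw [setIntegral_congr_ae S'.2 (hzero.mono fun x hx _ => hx)]
        simp
      refine ⟨0, ∅, Or.inr (Or.inr rfl), ?_⟩
      rw [iSup_congr hall, Measure.restrict_empty, integral_zero_measure, ciSup_const]
    · -- g ≤ 0 everywhere
      push_neg at hb
      refine ⟨0, ∅, Or.inr (Or.inr rfl), ?_⟩
      apply key_sup g hgInt _ MeasurableSet.empty
      · intro x hx
        have := fact2 x hx
        simp at this
        linarith
      · intro x hx
        exact absurd hx (Set.notMem_empty x)
  · -- a > 0 : S = Ici ((t-b)/a)
    refine ⟨(t - b) / a, Set.Ici ((t - b) / a), Or.inr (Or.inl rfl), ?_⟩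
    apply key_sup g hgInt _ measurableSet_Ici
    · intro x hx
      have := fact2 x hx
      rw [Set.mem_Ici, div_le_iff₀ ha]
      linarith
    · intro x hx
      rw [Set.mem_Ici, div_le_iff₀ ha] at hx
      exact fact1 x (by linarith)

end
end
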